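/- arXiv:2308.12240 — 3 statements merged into one kernel-verified Lean document; each statement's English description precedes it below -/
import Mathlib

section
/- Let p₀ be a probability density on ℝ^d and for t > 0 define p_t(x) = ∫ p₀(y) q_t(y,x) dy, where q_t is the Ornstein–Uhlenbeck transition kernel. Then for every t > 0 and x ∈ ℝ^d the Fokker–Planck equation holds: ∂_t p_t(x) = div(x ↦ x · p_t(x))(x) + Δ p_t(x), i.e. ∂_t p_t(x) = d · p_t(x) + ⟨x, ∇p_t(x)⟩ + Δ p_t(x), where ∇, div and Δ are taken in the space variable x. -/
open MeasureTheory Real Set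
open scoped RealInnerProductSpace

noncomputable section

/-- The standard Gaussian density on `ℝ^d`. -/
def gaussDensity (d : ℕ) (x : EuclideanSpace ℝ (Fin d)) : ℝ :=
  (2 * π) ^ (-(d : ℝ) / 2) * Real.exp (-‖x‖ ^ 2 / 2)

/-- The Ornstein–Uhlenbeck transition kernel `q_t(y, x)` on `ℝ^d`, for `t > 0`. -/
def ouKernel (d : ℕ) (t : ℝ) (y x : EuclideanSpace ℝ (Fin d)) : ℝ :=
  (2 * π * (1 - Real.exp (-2 * t))) ^ (-(d : ℝ) / 2) *
    Real.exp (-‖x - Real.exp (-t) • y‖ ^ 2 / (2 * (1 - Real.exp (-2 * t))))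

/-- The OU marginal densities `p_t(x) = ∫ p₀(y) q_t(y,x) dy`. -/
def ouMarginal (d : ℕ) (p₀ : EuclideanSpace ℝ (Fin d) → ℝ) (t : ℝ)
    (x : EuclideanSpace ℝ (Fin d)) : ℝ :=
  ∫ y, p₀ y * ouKernel d t y x

/-- The Laplacian (in the space variable) of `f : ℝ^d → ℝ`. -/
def laplacian (d : ℕ) (f : EuclideanSpace ℝ (Fin d) → ℝ) (x : EuclideanSpace ℝ (Fin d)) : ℝ :=
  ∑ i : Fin d,
    fderiv ℝ (fun y => fderiv ℝ f y (EuclideanSpace.single i 1)) x (EuclideanSpace.single i 1)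


/-!
With `s = 1 - e^{-2t}` and `u = x - e^{-t} y`, the kernel is `q = (2πs)^{-d/2} e^{-‖u‖²/(2s)}`,
and a direct computation shows that for each fixed `y` it solves the Fokker–Planck equation
itself: `∂ₜq = d q + ⟪x, ∇ₓq⟫ + Δₓq`. Since `r e^{-r²/(2s)} ≤ 1` and `r² e^{-r²/(2s)} ≤ 2` for
`s ≤ 1`, the kernel, its first two space derivatives and its time derivative are bounded
uniformly in `x` and `y`, and locally uniformly in `t > 0`. As `p₀` is integrable, dominated
convergence lets us differentiate `p_t = ∫ p₀(y) q_t(y, ·) dy` under the integral sign, and the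
equation for `p_t` is the `p₀`-average of the one for `q`.
-/

lemma one_add_sq_div_two_le_exp {s r : ℝ} (hs₀ : 0 < s) (hs₁ : s ≤ 1) :
    1 + r ^ 2 / 2 ≤ exp (r ^ 2 / (2 * s)) := by
  have : r ^ 2 / 2 ≤ r ^ 2 / (2 * s) :=
    div_le_div_of_nonneg_left (sq_nonneg r) (by positivity) (by linarith)
  linarith [add_one_le_exp (r ^ 2 / (2 * s))]

lemma mul_exp_neg_sq_div_le_one {s r : ℝ} (hs₀ : 0 < s) (hs₁ : s ≤ 1) :
    r * exp (-r ^ 2 / (2 * s)) ≤ 1 := by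
  rw [neg_div, exp_neg]
  refine mul_inv_le_one_of_le₀ ?_ (exp_nonneg _)
  nlinarith [one_add_sq_div_two_le_exp (r := r) hs₀ hs₁]

lemma sq_mul_exp_neg_sq_div_le_two {s r : ℝ} (hs₀ : 0 < s) (hs₁ : s ≤ 1) :
    r ^ 2 * exp (-r ^ 2 / (2 * s)) ≤ 2 := by
  rw [neg_div, exp_neg, ← div_eq_mul_inv, div_le_iff₀ (exp_pos _)]
  linarith [one_add_sq_div_two_le_exp (r := r) hs₀ hs₁]

lemma hasFDerivAt_gaussian {E : Type*} [NormedAddCommGroup E] [InnerProductSpace ℝ E]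
    (A s : ℝ) (v x : E) :
    HasFDerivAt (fun z : E => A * exp (-‖z - v‖ ^ 2 / (2 * s)))
      ((A * exp (-‖x - v‖ ^ 2 / (2 * s)) * -s⁻¹) • innerSL ℝ (x - v)) x := by
  have hsq : HasFDerivAt (fun z : E => -‖z - v‖ ^ 2 / (2 * s))
      ((-(2 * s)⁻¹) • (2 • innerSL ℝ (x - v))) x := by
    simpa [neg_div, div_eq_inv_mul] using
      ((hasFDerivAt_id x).sub_const v).norm_sq.const_mul (-(2 * s)⁻¹)
  refine (hsq.exp.const_mul A).congr_fderiv ?_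
  ext w
  simp only [smul_apply, innerSL_apply_apply, smul_eq_mul, nsmul_eq_mul]
  ring

def ouVar (t : ℝ) : ℝ := 1 - exp (-2 * t)

def ouNormConst (d : ℕ) (t : ℝ) : ℝ := (2 * π * ouVar t) ^ (-(d : ℝ) / 2)

lemma ouVar_pos {t : ℝ} (ht : 0 < t) : 0 < ouVar t := by
  have : exp (-2 * t) < 1 := exp_lt_one_iff.mpr (by linarith)
  rw [ouVar]; linarith

lemma ouVar_le_one (t : ℝ) : ouVar t ≤ 1 := by
  rw [ouVar]; linarith [exp_pos (-2 * t)]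

lemma ouVar_mono : Monotone ouVar := fun t₁ t₂ h => by
  have : exp (-2 * t₂) ≤ exp (-2 * t₁) := exp_le_exp.mpr (by linarith)
  rw [ouVar, ouVar]; linarith

lemma ouNormConst_pos (d : ℕ) {t : ℝ} (ht : 0 < t) : 0 < ouNormConst d t := by
  have := ouVar_pos ht
  unfold ouNormConst; positivity

lemma ouNormConst_anti (d : ℕ) {t₁ t₂ : ℝ} (ht₁ : 0 < t₁) (h : t₁ ≤ t₂) :
    ouNormConst d t₂ ≤ ouNormConst d t₁ := by
  have := ouVar_pos ht₁
  apply rpow_le_rpow_of_nonpos (by positivity)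
  · gcongr; exact ouVar_mono h
  · have : (0 : ℝ) ≤ d := Nat.cast_nonneg d
    linarith

section Kernel

variable {d : ℕ}

lemma ouKernel_eq (t : ℝ) (y x : EuclideanSpace ℝ (Fin d)) :
    ouKernel d t y x = ouNormConst d t * exp (-‖x - exp (-t) • y‖ ^ 2 / (2 * ouVar t)) := rfl

lemma ouKernel_nonneg {t : ℝ} (ht : 0 < t) (y x : EuclideanSpace ℝ (Fin d)) :
    0 ≤ ouKernel d t y x := by
  have := ouNormConst_pos d ht
  rw [ouKernel_eq]; positivity

lemma ouKernel_le {t : ℝ} (ht : 0 < t) (y x : EuclideanSpace ℝ (Fin d)) :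
    ouKernel d t y x ≤ ouNormConst d t := by
  rw [ouKernel_eq]
  refine mul_le_of_le_one_right (ouNormConst_pos d ht).le (exp_le_one_iff.mpr ?_)
  have := ouVar_pos ht
  exact div_nonpos_of_nonpos_of_nonneg (by simp) (by positivity)

lemma ouKernel_mul_norm_le {t : ℝ} (ht : 0 < t) (y x : EuclideanSpace ℝ (Fin d)) :
    ouKernel d t y x * ‖x - exp (-t) • y‖ ≤ ouNormConst d t := by
  rw [ouKernel_eq, mul_assoc, mul_comm (exp _)]
  exact mul_le_of_le_one_right (ouNormConst_pos d ht).le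
    (mul_exp_neg_sq_div_le_one (ouVar_pos ht) (ouVar_le_one t))

lemma ouKernel_mul_norm_sq_le {t : ℝ} (ht : 0 < t) (y x : EuclideanSpace ℝ (Fin d)) :
    ouKernel d t y x * ‖x - exp (-t) • y‖ ^ 2 ≤ 2 * ouNormConst d t := by
  rw [ouKernel_eq, mul_assoc, mul_comm (exp _), mul_comm 2 (ouNormConst d t)]
  exact mul_le_mul_of_nonneg_left
    (sq_mul_exp_neg_sq_div_le_two (ouVar_pos ht) (ouVar_le_one t)) (ouNormConst_pos d ht).le

lemma continuous_ouKernel (t : ℝ) (x : EuclideanSpace ℝ (Fin d)) :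
    Continuous fun y => ouKernel d t y x := by
  unfold ouKernel; fun_prop

def ouKernelFDeriv (d : ℕ) (t : ℝ) (y z : EuclideanSpace ℝ (Fin d)) :
    EuclideanSpace ℝ (Fin d) →L[ℝ] ℝ :=
  (ouKernel d t y z * -(ouVar t)⁻¹) • innerSL ℝ (z - exp (-t) • y)

def ouKernelFDeriv2 (d : ℕ) (t : ℝ) (y z e : EuclideanSpace ℝ (Fin d)) :
    EuclideanSpace ℝ (Fin d) →L[ℝ] ℝ :=
  (ouKernel d t y z * -(ouVar t)⁻¹) • innerSL ℝ e
    + (ouKernel d t y z * (ouVar t)⁻¹ ^ 2 * ⟪z - exp (-t) • y, e⟫) •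
      innerSL ℝ (z - exp (-t) • y)

lemma hasFDerivAt_ouKernel (t : ℝ) (y x : EuclideanSpace ℝ (Fin d)) :
    HasFDerivAt (ouKernel d t y) (ouKernelFDeriv d t y x) x :=
  hasFDerivAt_gaussian (ouNormConst d t) (ouVar t) (exp (-t) • y) x

lemma hasFDerivAt_ouKernelFDeriv_apply (t : ℝ) (y x e : EuclideanSpace ℝ (Fin d)) :
    HasFDerivAt (fun z => ouKernelFDeriv d t y z e) (ouKernelFDeriv2 d t y x e) x := by
  have hinner : HasFDerivAt (fun z => ⟪z - exp (-t) • y, e⟫) (innerSL ℝ e) x := by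
    have h := ((innerSL ℝ e).hasFDerivAt).comp x ((hasFDerivAt_id x).sub_const (exp (-t) • y))
    have heq : (fun z => ⟪z - exp (-t) • y, e⟫) = fun z => innerSL ℝ e (z - exp (-t) • y) := by
      funext z; simp [real_inner_comm]
    rwa [heq]
  refine (((hasFDerivAt_ouKernel t y x).mul_const (-(ouVar t)⁻¹)).mul hinner).congr_fderiv ?_
  ext w
  simp only [ouKernelFDeriv, ouKernelFDeriv2, add_apply, smul_apply, innerSL_apply_apply,
    smul_eq_mul, real_inner_comm]
  ring

lemma continuous_ouKernelFDeriv (t : ℝ) (x : EuclideanSpace ℝ (Fin d)) :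
    Continuous fun y => ouKernelFDeriv d t y x := by
  unfold ouKernelFDeriv
  have := continuous_ouKernel t x
  fun_prop

lemma continuous_ouKernelFDeriv2 (t : ℝ) (x e : EuclideanSpace ℝ (Fin d)) :
    Continuous fun y => ouKernelFDeriv2 d t y x e := by
  unfold ouKernelFDeriv2
  have := continuous_ouKernel t x
  fun_prop

lemma norm_ouKernelFDeriv_le {t : ℝ} (ht : 0 < t) (y z : EuclideanSpace ℝ (Fin d)) :
    ‖ouKernelFDeriv d t y z‖ ≤ ouNormConst d t * (ouVar t)⁻¹ := by
  have hs := ouVar_pos ht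
  rw [ouKernelFDeriv, norm_smul, innerSL_apply_norm, norm_mul, norm_neg, norm_inv,
    Real.norm_of_nonneg (ouKernel_nonneg ht y z), Real.norm_of_nonneg hs.le,
    mul_right_comm]
  gcongr
  exact ouKernel_mul_norm_le ht y z

lemma norm_ouKernelFDeriv2_le {t : ℝ} (ht : 0 < t) (y z e : EuclideanSpace ℝ (Fin d)) :
    ‖ouKernelFDeriv2 d t y z e‖
      ≤ ouNormConst d t * ((ouVar t)⁻¹ + 2 * (ouVar t)⁻¹ ^ 2) * ‖e‖ := by
  have hs := ouVar_pos ht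
  rw [ouKernelFDeriv2]
  set u := z - exp (-t) • y
  set q := ouKernel d t y z
  have hq : 0 ≤ q := ouKernel_nonneg ht y z
  calc _
      ≤ q * (ouVar t)⁻¹ * ‖e‖ + (q * ‖u‖ ^ 2) * (ouVar t)⁻¹ ^ 2 * ‖e‖ := by
        refine (norm_add_le _ _).trans (add_le_add (le_of_eq ?_) ?_)
        · rw [norm_smul, innerSL_apply_norm, norm_mul, norm_neg, norm_inv,
            Real.norm_of_nonneg hq, Real.norm_of_nonneg hs.le]
        · rw [norm_smul, innerSL_apply_norm, norm_mul, norm_mul, Real.norm_of_nonneg hq,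
            norm_pow, norm_inv, Real.norm_of_nonneg hs.le]
          have hue : ‖⟪u, e⟫‖ * ‖u‖ ≤ ‖u‖ ^ 2 * ‖e‖ := by
            nlinarith [norm_inner_le_norm (𝕜 := ℝ) u e, norm_nonneg u]
          calc _ = q * (ouVar t)⁻¹ ^ 2 * (‖⟪u, e⟫‖ * ‖u‖) := by ring
            _ ≤ q * (ouVar t)⁻¹ ^ 2 * (‖u‖ ^ 2 * ‖e‖) := by gcongr
            _ = _ := by ring
    _ ≤ ouNormConst d t * (ouVar t)⁻¹ * ‖e‖ + (2 * ouNormConst d t) * (ouVar t)⁻¹ ^ 2 * ‖e‖ := by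
        gcongr ?_ * _ * _ + ?_ * _ * _
        · exact ouKernel_le ht y z
        · exact ouKernel_mul_norm_sq_le ht y z
    _ = _ := by ring

lemma sum_ouKernelFDeriv2_single (t : ℝ) (y x : EuclideanSpace ℝ (Fin d)) :
    ∑ i, ouKernelFDeriv2 d t y x (EuclideanSpace.single i 1) (EuclideanSpace.single i 1)
      = ouKernel d t y x * ((ouVar t)⁻¹ ^ 2 * ‖x - exp (-t) • y‖ ^ 2 - d * (ouVar t)⁻¹) := by
  have hsq := (EuclideanSpace.basisFun (Fin d) ℝ).sum_sq_inner_left (x - exp (-t) • y)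
  simp only [EuclideanSpace.basisFun_apply] at hsq
  simp only [ouKernelFDeriv2, add_apply, smul_apply, innerSL_apply_apply, smul_eq_mul,
    Finset.sum_add_distrib, real_inner_self_eq_norm_sq, PiLp.norm_single, norm_one, one_pow,
    Finset.sum_const, Finset.card_univ, Fintype.card_fin, nsmul_eq_mul, mul_assoc, ← sq,
    ← Finset.mul_sum, hsq]
  ring

/-- `ouKernelFDeriv d t y x x = ⟪x, ∇ₓq⟫` and the sum is `Δₓq`: this is the right-hand side of the
Fokker–Planck equation for `x ↦ q_t(y, x)`. -/
def fokkerPlanckOuKernel (d : ℕ) (t : ℝ) (y x : EuclideanSpace ℝ (Fin d)) : ℝ :=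
  d * ouKernel d t y x + ouKernelFDeriv d t y x x
    + ∑ i, ouKernelFDeriv2 d t y x (EuclideanSpace.single i 1) (EuclideanSpace.single i 1)

lemma hasDerivAt_ouKernel_time {t : ℝ} (ht : 0 < t) (y x : EuclideanSpace ℝ (Fin d)) :
    HasDerivAt (fun τ => ouKernel d τ y x) (fokkerPlanckOuKernel d t y x) t := by
  have hs : 0 < 1 - exp (-2 * t) := ouVar_pos ht
  have hexp2 : HasDerivAt (fun τ => exp (-2 * τ)) (exp (-2 * t) * -2) t := by
    simpa using ((hasDerivAt_id t).const_mul (-2 : ℝ)).exp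
  have hexp : HasDerivAt (fun τ => exp (-τ)) (exp (-t) * -1) t := by
    simpa using (hasDerivAt_id t).neg.exp
  have hA := ((hexp2.const_sub 1).const_mul (2 * π)).rpow_const (p := -(d : ℝ) / 2)
    (Or.inl (by positivity))
  have hE := ((((hexp.smul_const y).const_sub x).norm_sq.neg).div
    ((hexp2.const_sub 1).const_mul 2) (by positivity)).exp
  refine (hA.mul hE).congr_deriv ?_
  have hsq : exp (-2 * t) = exp (-t) ^ 2 := by rw [← exp_nat_mul]; ring_nf
  have hrpow : (2 * π * (1 - exp (-2 * t))) ^ (-(d : ℝ) / 2 - 1)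
      = (2 * π * (1 - exp (-2 * t))) ^ (-(d : ℝ) / 2) / (2 * π * (1 - exp (-2 * t))) := by
    rw [rpow_sub (by positivity), rpow_one]
  have hux : ⟪x - exp (-t) • y, x⟫
      = ‖x - exp (-t) • y‖ ^ 2 + exp (-t) * ⟪x - exp (-t) • y, y⟫ := by
    calc ⟪x - exp (-t) • y, x⟫ = ⟪x - exp (-t) • y, x - exp (-t) • y + exp (-t) • y⟫ := by
          rw [sub_add_cancel]
      _ = _ := by rw [inner_add_right, real_inner_self_eq_norm_sq, inner_smul_right]
  rw [fokkerPlanckOuKernel, sum_ouKernelFDeriv2_single, ouKernelFDeriv, smul_apply,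
    innerSL_apply_apply, hux]
  simp only [Pi.neg_apply, Pi.div_apply, ouKernel_eq, ouNormConst, ouVar, hrpow, inner_neg_right,
    inner_smul_right, smul_eq_mul]
  rw [hsq] at hs ⊢
  field_simp
  ring

lemma abs_fokkerPlanckOuKernel_le {t₀ t : ℝ} (ht₀ : 0 < t₀) (ht : t₀ ≤ t)
    (y x : EuclideanSpace ℝ (Fin d)) :
    |fokkerPlanckOuKernel d t y x|
      ≤ ouNormConst d t₀ * (d + (ouVar t₀)⁻¹ * ‖x‖ + d * ((ouVar t₀)⁻¹ + 2 * (ouVar t₀)⁻¹ ^ 2)) := by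
  have ht' : 0 < t := ht₀.trans_le ht
  have hs₀ := ouVar_pos ht₀
  have hsinv : (ouVar t)⁻¹ ≤ (ouVar t₀)⁻¹ := inv_anti₀ hs₀ (ouVar_mono ht)
  have hA := ouNormConst_anti d ht₀ ht
  have hs := ouVar_pos ht'
  have hA₀ := (ouNormConst_pos d ht₀).le
  have hG : |ouKernelFDeriv d t y x x| ≤ ouNormConst d t * (ouVar t)⁻¹ * ‖x‖ :=
    ((ouKernelFDeriv d t y x).le_opNorm x).trans (by gcongr; exact norm_ouKernelFDeriv_le ht' y x)
  have hH : |∑ i, ouKernelFDeriv2 d t y x (EuclideanSpace.single i 1) (EuclideanSpace.single i 1)|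
      ≤ d * (ouNormConst d t * ((ouVar t)⁻¹ + 2 * (ouVar t)⁻¹ ^ 2)) := by
    refine (Finset.abs_sum_le_sum_abs _ _).trans
      ((Finset.sum_le_card_nsmul _ _ (ouNormConst d t * ((ouVar t)⁻¹ + 2 * (ouVar t)⁻¹ ^ 2))
        fun i _ => ?_).trans_eq (by simp))
    have hi := ((ouKernelFDeriv2 d t y x (EuclideanSpace.single i 1)).le_opNorm
      (EuclideanSpace.single i 1)).trans (mul_le_mul_of_nonneg_right
        (norm_ouKernelFDeriv2_le ht' y x (EuclideanSpace.single i 1)) (norm_nonneg _))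
    simpa using hi
  calc |fokkerPlanckOuKernel d t y x|
      ≤ d * ouNormConst d t + ouNormConst d t * (ouVar t)⁻¹ * ‖x‖
          + d * (ouNormConst d t * ((ouVar t)⁻¹ + 2 * (ouVar t)⁻¹ ^ 2)) := by
        refine (abs_add_le _ _).trans (add_le_add ((abs_add_le _ _).trans (add_le_add ?_ hG)) hH)
        rw [abs_mul, Nat.abs_cast, abs_of_nonneg (ouKernel_nonneg ht' y x)]
        gcongr
        exact ouKernel_le ht' y x
    _ ≤ d * ouNormConst d t₀ + ouNormConst d t₀ * (ouVar t₀)⁻¹ * ‖x‖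
          + d * (ouNormConst d t₀ * ((ouVar t₀)⁻¹ + 2 * (ouVar t₀)⁻¹ ^ 2)) := by
        gcongr
    _ = _ := by ring

end Kernel

section ParametricIntegral

variable {α : Type*} [MeasurableSpace α] {μ : Measure α} {p : α → ℝ}

lemma hasFDerivAt_integral_mul_of_bounded {H : Type*} [NormedAddCommGroup H] [NormedSpace ℝ H]
    (hp : Integrable p μ) {f : H → α → ℝ} {f' : H → α → H →L[ℝ] ℝ} {C C' : ℝ} (x₀ : H)
    (hf_meas : ∀ x, AEStronglyMeasurable (f x) μ) (hf_le : ∀ y, ‖f x₀ y‖ ≤ C)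
    (hf'_meas : AEStronglyMeasurable (f' x₀) μ) (hf'_le : ∀ x y, ‖f' x y‖ ≤ C')
    (hf' : ∀ x y, HasFDerivAt (f · y) (f' x y) x) :
    HasFDerivAt (fun x => ∫ y, p y * f x y ∂μ) (∫ y, p y • f' x₀ y ∂μ) x₀ :=
  hasFDerivAt_integral_of_dominated_of_fderiv_le (bound := fun y => ‖p y‖ * C') Filter.univ_mem
    (.of_forall fun x => hp.aestronglyMeasurable.mul (hf_meas x))
    (hp.mul_bdd (hf_meas x₀) (.of_forall hf_le)) (hp.aestronglyMeasurable.smul hf'_meas)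
    (.of_forall fun y x _ => by
      rw [norm_smul]; exact mul_le_mul_of_nonneg_left (hf'_le x y) (norm_nonneg _))
    (hp.norm.mul_const C') (.of_forall fun y x _ => (hf' x y).const_mul (p y))

lemma hasDerivAt_integral_mul_of_bounded (hp : Integrable p μ) {f f' : ℝ → α → ℝ} {s : Set ℝ}
    {t₀ C C' : ℝ} (hs : s ∈ nhds t₀)
    (hf_meas : ∀ t, AEStronglyMeasurable (f t) μ) (hf_le : ∀ y, ‖f t₀ y‖ ≤ C)
    (hf'_meas : AEStronglyMeasurable (f' t₀) μ) (hf'_le : ∀ t ∈ s, ∀ y, ‖f' t y‖ ≤ C')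
    (hf' : ∀ t ∈ s, ∀ y, HasDerivAt (f · y) (f' t y) t) :
    HasDerivAt (fun t => ∫ y, p y * f t y ∂μ) (∫ y, p y * f' t₀ y ∂μ) t₀ :=
  (hasDerivAt_integral_of_dominated_loc_of_deriv_le (bound := fun y => ‖p y‖ * C') hs
    (.of_forall fun t => hp.aestronglyMeasurable.mul (hf_meas t))
    (hp.mul_bdd (hf_meas t₀) (.of_forall hf_le)) (hp.aestronglyMeasurable.mul hf'_meas)
    (.of_forall fun y t ht => by
      rw [norm_mul]; exact mul_le_mul_of_nonneg_left (hf'_le t ht y) (norm_nonneg _))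
    (hp.norm.mul_const C') (.of_forall fun y t ht => (hf' t ht y).const_mul (p y))).2

end ParametricIntegral

section Marginal

variable {d : ℕ} {p₀ : EuclideanSpace ℝ (Fin d) → ℝ} {t : ℝ}

lemma integrable_mul_ouKernel (hp : Integrable p₀) (ht : 0 < t) (x : EuclideanSpace ℝ (Fin d)) :
    Integrable fun y => p₀ y * ouKernel d t y x :=
  hp.mul_bdd (continuous_ouKernel t x).aestronglyMeasurable (.of_forall fun y => by
    rw [Real.norm_of_nonneg (ouKernel_nonneg ht y x)]; exact ouKernel_le ht y x)

lemma integrable_smul_ouKernelFDeriv (hp : Integrable p₀) (ht : 0 < t)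
    (x : EuclideanSpace ℝ (Fin d)) :
    Integrable fun y => p₀ y • ouKernelFDeriv d t y x :=
  hp.smul_bdd _ (continuous_ouKernelFDeriv t x).aestronglyMeasurable
    (.of_forall fun y => norm_ouKernelFDeriv_le ht y x)

lemma integrable_smul_ouKernelFDeriv2 (hp : Integrable p₀) (ht : 0 < t)
    (x e : EuclideanSpace ℝ (Fin d)) :
    Integrable fun y => p₀ y • ouKernelFDeriv2 d t y x e :=
  hp.smul_bdd _ (continuous_ouKernelFDeriv2 t x e).aestronglyMeasurable
    (.of_forall fun y => norm_ouKernelFDeriv2_le ht y x e)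

lemma hasFDerivAt_ouMarginal (hp : Integrable p₀) (ht : 0 < t) (x : EuclideanSpace ℝ (Fin d)) :
    HasFDerivAt (ouMarginal d p₀ t) (∫ y, p₀ y • ouKernelFDeriv d t y x) x :=
  hasFDerivAt_integral_mul_of_bounded hp x
    (fun z => (continuous_ouKernel t z).aestronglyMeasurable)
    (fun y => by rw [Real.norm_of_nonneg (ouKernel_nonneg ht y x)]; exact ouKernel_le ht y x)
    (continuous_ouKernelFDeriv t x).aestronglyMeasurable (fun z y => norm_ouKernelFDeriv_le ht y z)
    (fun z y => hasFDerivAt_ouKernel t y z)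

lemma fderiv_ouMarginal_apply (hp : Integrable p₀) (ht : 0 < t) (x e : EuclideanSpace ℝ (Fin d)) :
    fderiv ℝ (ouMarginal d p₀ t) x e = ∫ y, p₀ y * ouKernelFDeriv d t y x e := by
  rw [(hasFDerivAt_ouMarginal hp ht x).fderiv,
    ContinuousLinearMap.integral_apply (integrable_smul_ouKernelFDeriv hp ht x)]
  rfl

lemma hasFDerivAt_fderiv_ouMarginal_apply (hp : Integrable p₀) (ht : 0 < t)
    (x e : EuclideanSpace ℝ (Fin d)) :
    HasFDerivAt (fun z => fderiv ℝ (ouMarginal d p₀ t) z e)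
      (∫ y, p₀ y • ouKernelFDeriv2 d t y x e) x := by
  simp_rw [fderiv_ouMarginal_apply hp ht]
  refine hasFDerivAt_integral_mul_of_bounded (C := ouNormConst d t * (ouVar t)⁻¹ * ‖e‖) hp x
    (fun z => ((continuous_ouKernelFDeriv t z).clm_apply continuous_const).aestronglyMeasurable)
    (fun y => ?_) (continuous_ouKernelFDeriv2 t x e).aestronglyMeasurable
    (fun z y => norm_ouKernelFDeriv2_le ht y z e)
    (fun z y => hasFDerivAt_ouKernelFDeriv_apply t y z e)
  exact ((ouKernelFDeriv d t y x).le_opNorm e).trans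
    (mul_le_mul_of_nonneg_right (norm_ouKernelFDeriv_le ht y x) (norm_nonneg e))

lemma continuous_fokkerPlanckOuKernel (t : ℝ) (x : EuclideanSpace ℝ (Fin d)) :
    Continuous fun y => fokkerPlanckOuKernel d t y x := by
  unfold fokkerPlanckOuKernel
  have := continuous_ouKernel t x
  have := continuous_ouKernelFDeriv t x
  have := fun i : Fin d => continuous_ouKernelFDeriv2 t x (EuclideanSpace.single i 1)
  fun_prop

lemma hasDerivAt_ouMarginal_time (hp : Integrable p₀) (ht : 0 < t)
    (x : EuclideanSpace ℝ (Fin d)) :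
    HasDerivAt (fun τ => ouMarginal d p₀ τ x) (∫ y, p₀ y * fokkerPlanckOuKernel d t y x) t :=
  hasDerivAt_integral_mul_of_bounded hp (Ioi_mem_nhds (half_lt_self ht))
    (fun τ => (continuous_ouKernel τ x).aestronglyMeasurable)
    (fun y => by rw [Real.norm_of_nonneg (ouKernel_nonneg ht y x)]; exact ouKernel_le ht y x)
    (continuous_fokkerPlanckOuKernel t x).aestronglyMeasurable
    (fun τ hτ y => abs_fokkerPlanckOuKernel_le (half_pos ht) (le_of_lt hτ) y x)
    (fun τ hτ y => hasDerivAt_ouKernel_time ((half_pos ht).trans hτ) y x)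

lemma inner_gradient_ouMarginal (hp : Integrable p₀) (ht : 0 < t) (x : EuclideanSpace ℝ (Fin d)) :
    ⟪x, gradient (ouMarginal d p₀ t) x⟫ = ∫ y, p₀ y * ouKernelFDeriv d t y x x := by
  rw [real_inner_comm, gradient, InnerProductSpace.toDual_symm_apply,
    fderiv_ouMarginal_apply hp ht]

lemma laplacian_ouMarginal (hp : Integrable p₀) (ht : 0 < t) (x : EuclideanSpace ℝ (Fin d)) :
    laplacian d (ouMarginal d p₀ t) x
      = ∑ i, ∫ y, p₀ y * ouKernelFDeriv2 d t y x
          (EuclideanSpace.single i 1) (EuclideanSpace.single i 1) :=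
  Finset.sum_congr rfl fun i _ => by
    rw [(hasFDerivAt_fderiv_ouMarginal_apply hp ht x _).fderiv,
      ContinuousLinearMap.integral_apply (integrable_smul_ouKernelFDeriv2 hp ht x _)]
    rfl

end Marginal

theorem stmt1_general (d : ℕ) (p₀ : EuclideanSpace ℝ (Fin d) → ℝ)
    (h₀int : ∫ y, p₀ y = 1) :
    ∀ t > (0 : ℝ), ∀ x : EuclideanSpace ℝ (Fin d),
      HasDerivAt (fun s => ouMarginal d p₀ s x)
        ((d : ℝ) * ouMarginal d p₀ t x
          + ⟪x, gradient (fun y => ouMarginal d p₀ t y) x⟫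
          + laplacian d (fun y => ouMarginal d p₀ t y) x) t := by
  intro t ht x
  have hp : Integrable p₀ := .of_integral_ne_zero (by rw [h₀int]; exact one_ne_zero)
  have hq := (integrable_mul_ouKernel hp ht x).const_mul (d : ℝ)
  have hG := (integrable_smul_ouKernelFDeriv hp ht x).apply_continuousLinearMap x
  have hH : ∀ i, Integrable fun y =>
      p₀ y * ouKernelFDeriv2 d t y x (EuclideanSpace.single i 1) (EuclideanSpace.single i 1) :=
    fun i => (integrable_smul_ouKernelFDeriv2 hp ht x _).apply_continuousLinearMap _
  convert hasDerivAt_ouMarginal_time hp ht x using 1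
  rw [inner_gradient_ouMarginal hp ht, laplacian_ouMarginal hp ht, ouMarginal,
    ← integral_const_mul, ← integral_finsetSum _ fun i _ => hH i, ← integral_add, ← integral_add]
  · congr 1 with y
    simp only [fokkerPlanckOuKernel, mul_add, Finset.mul_sum]
    ring
  exacts [hq.add hG, integrable_finsetSum _ fun i _ => hH i, hq, hG]

theorem stmt1 (d : ℕ) (p₀ : EuclideanSpace ℝ (Fin d) → ℝ)
    (h₀meas : Measurable p₀) (h₀nonneg : ∀ y, 0 ≤ p₀ y)
    (h₀int : ∫ y, p₀ y = 1) :
    ∀ t > (0 : ℝ), ∀ x : EuclideanSpace ℝ (Fin d),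
      HasDerivAt (fun s => ouMarginal d p₀ s x)
        ((d : ℝ) * ouMarginal d p₀ t x
          + ⟪x, gradient (fun y => ouMarginal d p₀ t y) x⟫
          + laplacian d (fun y => ouMarginal d p₀ t y) x) t :=
  stmt1_general d p₀ h₀int
end
end

section
/- There exists a universal constant C > 0 with the following property. Let μ be a probability measure on ℝ^d with positive twice continuously differentiable density p (with respect to Lebesgue measure) and finite second moment M₂² = ∫ ‖x‖² dμ(x), such that x ↦ ∇ log p(x) is L-Lipschitz and ∫ ‖∇ log p‖² dμ < +∞. Then the relative Fisher information of μ with respect to the standard Gaussian satisfies I(μ | γ^d) = ∫ ‖∇ log(p(x)/γ^d(x))‖² dμ(x) ≤ C ( dL + M₂² ). -/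
open MeasureTheory Real Set
open scoped ENNReal NNReal

noncomputable section

/-!
Since `log γ^d(x) = -‖x‖²/2 + const`, the relative score is `∇ log p(x) + x`, so
`I(μ | γ^d) ≤ 2 ∫ ‖∇ log p‖² dμ + 2 M₂²`. For the first term, integrate by parts in each
coordinate: `∫ p (∂ᵢ log p)² = ∫ ∂ᵢ p · ∂ᵢ log p = -∫ p ∂ᵢ² log p ≤ L`, because an `L`-Lipschitz
score has second derivatives bounded by `L`. Summing over the `d` coordinates gives
`∫ ‖∇ log p‖² dμ ≤ d L`, hence the bound with `C = 2`.
-/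

open InnerProductSpace
open scoped Gradient

theorem norm_add_sq_le_two_mul {E : Type*} [SeminormedAddCommGroup E] (a b : E) :
    ‖a + b‖ ^ 2 ≤ 2 * (‖a‖ ^ 2 + ‖b‖ ^ 2) :=
  (pow_le_pow_left₀ (norm_nonneg _) (norm_add_le a b) 2).trans add_sq_le

section Gradient

variable {F : Type*} [NormedAddCommGroup F] [InnerProductSpace ℝ F] [CompleteSpace F]

theorem HasGradientAt.add {f g : F → ℝ} {f' g' x : F} (hf : HasGradientAt f f' x)
    (hg : HasGradientAt g g' x) : HasGradientAt (fun y => f y + g y) (f' + g') x := by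
  rw [hasGradientAt_iff_hasFDerivAt, map_add] at *
  exact hf.add hg

theorem hasGradientAt_const_add_half_norm_sq (c : ℝ) (x : F) :
    HasGradientAt (fun y => c + ‖y‖ ^ 2 / 2) x x := by
  rw [hasGradientAt_iff_hasFDerivAt]
  simp_rw [div_eq_mul_inv]
  have h := ((hasStrictFDerivAt_norm_sq x).hasFDerivAt.mul_const (2⁻¹ : ℝ)).const_add c
  refine h.congr_fderiv ?_
  ext y
  simp [toDual_apply_apply]

theorem ContDiff.differentiable_gradient {f : F → ℝ} (hf : ContDiff ℝ 2 f) :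
    Differentiable ℝ (∇ f) :=
  (toDual ℝ F).symm.differentiable.comp
    ((hf.fderiv_right (m := 1) le_rfl).differentiable one_ne_zero)

theorem fderiv_eq_mul_inner_gradient_log {p : F → ℝ} {x : F} (hp : DifferentiableAt ℝ p x)
    (hpx : p x ≠ 0) (v : F) :
    fderiv ℝ p x v = p x * ⟪∇ (fun y => Real.log (p y)) x, v⟫_ℝ := by
  rw [inner_gradient_left, (hp.hasFDerivAt.log hpx).fderiv]
  simp [hpx]

end Gradient

theorem log_gaussDensity (d : ℕ) (x : EuclideanSpace ℝ (Fin d)) :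
    Real.log (gaussDensity d x) = -(d / 2 * Real.log (2 * π) + ‖x‖ ^ 2 / 2) := by
  rw [gaussDensity, Real.log_mul (by positivity) (exp_ne_zero _), Real.log_exp,
    Real.log_rpow (by positivity)]
  ring

theorem gaussDensity_ne_zero (d : ℕ) (x : EuclideanSpace ℝ (Fin d)) : gaussDensity d x ≠ 0 := by
  unfold gaussDensity; positivity

theorem gradient_log_div_gaussDensity {d : ℕ} {p : EuclideanSpace ℝ (Fin d) → ℝ}
    (hp : ∀ y, p y ≠ 0) {x : EuclideanSpace ℝ (Fin d)} (hpx : DifferentiableAt ℝ p x) :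
    ∇ (fun y => Real.log (p y / gaussDensity d y)) x = ∇ (fun y => Real.log (p y)) x + x := by
  have hsplit : (fun y => Real.log (p y / gaussDensity d y))
      = fun y => Real.log (p y) + (d / 2 * Real.log (2 * π) + ‖y‖ ^ 2 / 2) := by
    funext y
    rw [Real.log_div (hp y) (gaussDensity_ne_zero d y), log_gaussDensity, sub_neg_eq_add]
  rw [hsplit]
  exact ((hpx.log (hp x)).hasGradientAt.add
    (hasGradientAt_const_add_half_norm_sq _ x)).gradient

section IntegrationByParts

variable {E : Type*} [NormedAddCommGroup E] [NormedSpace ℝ E] [FiniteDimensional ℝ E]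
  [MeasurableSpace E] [BorelSpace E] {μ : Measure E} [μ.IsAddHaarMeasure]

theorem integral_mul_sq_le_of_fderiv_eq_mul {p φ : E → ℝ} {v : E} {K : ℝ≥0}
    (hp : Differentiable ℝ p) (hp0 : ∀ x, 0 ≤ p x) (hp_int : Integrable p μ)
    (hφ : Differentiable ℝ φ) (hφK : LipschitzWith K φ)
    (hpφ : ∀ x, fderiv ℝ p x v = p x * φ x)
    (hpφ2 : Integrable (fun x => p x * φ x ^ 2) μ) :
    ∫ x, p x * φ x ^ 2 ∂μ ≤ K * ‖v‖ * ∫ x, p x ∂μ := by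
  have hφ' : ∀ x, |fderiv ℝ φ x v| ≤ K * ‖v‖ := fun x =>
    ((fderiv ℝ φ x).le_opNorm v).trans
      (mul_le_mul_of_nonneg_right (norm_fderiv_le_of_lipschitz ℝ hφK) (norm_nonneg v))
  have hpφ' : Integrable (fun x => p x * fderiv ℝ φ x v) μ := by
    refine (hp_int.mul_const (K * ‖v‖)).mono' (hp.continuous.aestronglyMeasurable.mul
      (measurable_fderiv_apply_const ℝ φ v).aestronglyMeasurable) (ae_of_all _ fun x => ?_)
    rw [norm_mul, Real.norm_of_nonneg (hp0 x)]
    exact mul_le_mul_of_nonneg_left (hφ' x) (hp0 x)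
  -- `|φ| ≤ 1 + φ ^ 2`, so `p * φ` is dominated by `p + p * φ ^ 2`
  have hpφ1 : Integrable (fun x => p x * φ x) μ := by
    refine (hp_int.add hpφ2).mono' (hp.continuous.aestronglyMeasurable.mul
      hφK.continuous.aestronglyMeasurable) (ae_of_all _ fun x => ?_)
    rw [norm_mul, Real.norm_of_nonneg (hp0 x), Real.norm_eq_abs, Pi.add_apply, ← mul_one_add]
    refine mul_le_mul_of_nonneg_left ?_ (hp0 x)
    nlinarith [abs_nonneg (φ x), sq_abs (φ x)]
  have hibp := integral_mul_fderiv_eq_neg_fderiv_mul_of_integrable (μ := μ)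
    (by simpa only [hpφ, mul_assoc, sq] using hpφ2) hpφ' hpφ1 (fun x _ => hp x) (fun x _ => hφ x)
  calc ∫ x, p x * φ x ^ 2 ∂μ = ∫ x, -(p x * fderiv ℝ φ x v) ∂μ := by
        rw [integral_neg, hibp, neg_neg]
        simp only [hpφ, mul_assoc, sq]
    _ ≤ ∫ x, K * ‖v‖ * p x ∂μ := by
        refine integral_mono hpφ'.neg (hp_int.const_mul _) fun x => ?_
        have := (abs_le.mp (hφ' x)).1
        nlinarith [hp0 x]
    _ = K * ‖v‖ * ∫ x, p x ∂μ := integral_const_mul _ _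

end IntegrationByParts

theorem integral_mul_norm_gradient_log_sq_le {ι : Type*} [Fintype ι] [DecidableEq ι]
    {μ : Measure (EuclideanSpace ℝ ι)}
    [μ.IsAddHaarMeasure] {p : EuclideanSpace ℝ ι → ℝ} {L : ℝ≥0} (hp0 : ∀ x, 0 < p x)
    (hp : ContDiff ℝ 2 p) (hLip : LipschitzWith L (∇ fun y => Real.log (p y)))
    (hp_int : Integrable p μ)
    (hI : Integrable (fun x => p x * ‖∇ (fun y => Real.log (p y)) x‖ ^ 2) μ) :
    ∫ x, p x * ‖∇ (fun y => Real.log (p y)) x‖ ^ 2 ∂μ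
      ≤ Fintype.card ι * L * ∫ x, p x ∂μ := by
  set g := ∇ fun y => Real.log (p y)
  have hg : Differentiable ℝ g := (hp.log fun y => (hp0 y).ne').differentiable_gradient
  have hnorm_sq : ∀ x, p x * ‖g x‖ ^ 2 = ∑ i, p x * g x i ^ 2 := fun x => by
    simp [EuclideanSpace.norm_sq_eq, Finset.mul_sum]
  have hcoord_int : ∀ i, Integrable (fun x => p x * g x i ^ 2) μ := fun i => by
    refine hI.mono' (hp.continuous.mul
      (((EuclideanSpace.proj i).continuous.comp hLip.continuous).pow 2)).aestronglyMeasurable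
      (ae_of_all _ fun x => ?_)
    rw [norm_mul, norm_pow, Real.norm_of_nonneg (hp0 x).le]
    exact mul_le_mul_of_nonneg_left
      (pow_le_pow_left₀ (norm_nonneg _) (PiLp.norm_apply_le (g x) i) 2) (hp0 x).le
  have hcoord : ∀ i, ∫ x, p x * g x i ^ 2 ∂μ ≤ L * ∫ x, p x ∂μ := fun i => by
    simpa using integral_mul_sq_le_of_fderiv_eq_mul (φ := fun x => g x i)
      (v := EuclideanSpace.single i 1)
      (hp.differentiable two_ne_zero) (fun x => (hp0 x).le) hp_int
      ((EuclideanSpace.proj (𝕜 := ℝ) i).differentiable.comp hg)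
      (LipschitzWith.of_dist_le_mul fun x y =>
        (PiLp.dist_apply_le _ _ i).trans (hLip.dist_le_mul x y))
      (fun x => by
        rw [fderiv_eq_mul_inner_gradient_log (hp.differentiable two_ne_zero x) (hp0 x).ne',
          EuclideanSpace.inner_single_right]
        simp [g]) (hcoord_int i)
  calc ∫ x, p x * ‖g x‖ ^ 2 ∂μ = ∑ i, ∫ x, p x * g x i ^ 2 ∂μ := by
        simp_rw [hnorm_sq]
        exact integral_finsetSum _ fun i _ => hcoord_int i
    _ ≤ ∑ _i : ι, L * ∫ x, p x ∂μ := Finset.sum_le_sum fun i _ => hcoord i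
    _ = Fintype.card ι * L * ∫ x, p x ∂μ := by simp [mul_assoc]

section WithDensity

variable {X : Type*} [MeasurableSpace X] {μ : Measure X} {p : X → ℝ}

theorem integral_withDensity_ofReal (hp : Measurable p) (hp0 : ∀ x, 0 ≤ p x) (f : X → ℝ) :
    ∫ x, f x ∂μ.withDensity (fun x => ENNReal.ofReal (p x)) = ∫ x, p x * f x ∂μ := by
  rw [integral_withDensity_eq_integral_toReal_smul hp.ennreal_ofReal
    (ae_of_all _ fun _ => ENNReal.ofReal_lt_top)]
  simp [ENNReal.toReal_ofReal (hp0 _)]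

theorem integrable_withDensity_ofReal_iff (hp : Measurable p) (hp0 : ∀ x, 0 ≤ p x)
    {f : X → ℝ} :
    Integrable f (μ.withDensity fun x => ENNReal.ofReal (p x))
      ↔ Integrable (fun x => p x * f x) μ := by
  rw [integrable_withDensity_iff_integrable_smul' hp.ennreal_ofReal
    (ae_of_all _ fun _ => ENNReal.ofReal_lt_top)]
  simp [ENNReal.toReal_ofReal (hp0 _)]

end WithDensity

theorem integral_norm_gradient_log_sq_le {ι : Type*} [Fintype ι] [DecidableEq ι]
    {p : EuclideanSpace ℝ ι → ℝ} {L : ℝ≥0} (hp0 : ∀ x, 0 < p x) (hp : ContDiff ℝ 2 p)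
    (hLip : LipschitzWith L (∇ fun y => Real.log (p y)))
    [IsProbabilityMeasure (volume.withDensity fun x => ENNReal.ofReal (p x))]
    (hI : Integrable (fun x => ‖∇ (fun y => Real.log (p y)) x‖ ^ 2)
      (volume.withDensity fun x => ENNReal.ofReal (p x))) :
    ∫ x, ‖∇ (fun y => Real.log (p y)) x‖ ^ 2 ∂(volume.withDensity fun x => ENNReal.ofReal (p x))
      ≤ Fintype.card ι * L := by
  have hpm : Measurable p := hp.continuous.measurable
  have hp0' : ∀ x, 0 ≤ p x := fun x => (hp0 x).le
  have hp_int : Integrable p := by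
    simpa using (integrable_withDensity_ofReal_iff hpm hp0').1 (integrable_const (1 : ℝ))
  have hp_one : ∫ x, p x = 1 := by
    simpa using (integral_withDensity_ofReal (μ := volume) hpm hp0' fun _ => (1 : ℝ)).symm
  rw [integral_withDensity_ofReal hpm hp0']
  simpa [hp_one] using integral_mul_norm_gradient_log_sq_le hp0 hp hLip hp_int
    ((integrable_withDensity_ofReal_iff hpm hp0').1 hI)

theorem stmt10 :
    ∃ C > (0 : ℝ), ∀ (d : ℕ) (μ : Measure (EuclideanSpace ℝ (Fin d)))
      [IsProbabilityMeasure μ] (p : EuclideanSpace ℝ (Fin d) → ℝ) (L : ℝ≥0),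
      μ = volume.withDensity (fun x => ENNReal.ofReal (p x)) →
      (∀ x, 0 < p x) →
      ContDiff ℝ 2 p →
      LipschitzWith L (fun x => gradient (fun y => Real.log (p y)) x) →
      Integrable (fun x => ‖x‖ ^ 2) μ →
      Integrable (fun x => ‖gradient (fun y => Real.log (p y)) x‖ ^ 2) μ →
      (∫ x, ‖gradient (fun y => Real.log (p y / gaussDensity d y)) x‖ ^ 2 ∂μ)
        ≤ C * ((d : ℝ) * L + ∫ x, ‖x‖ ^ 2 ∂μ) := by
  refine ⟨2, two_pos, fun d μ _ p L hμ hp0 hp hLip hM2 hI => ?_⟩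
  have hfisher : ∫ x, ‖∇ (fun y => Real.log (p y)) x‖ ^ 2 ∂μ ≤ d * L := by
    subst hμ
    simpa using integral_norm_gradient_log_sq_le hp0 hp hLip hI
  simp_rw [gradient_log_div_gaussDensity (fun y => (hp0 y).ne') (hp.differentiable two_ne_zero _)]
  calc ∫ x, ‖∇ (fun y => Real.log (p y)) x + x‖ ^ 2 ∂μ
      ≤ ∫ x, 2 * (‖∇ (fun y => Real.log (p y)) x‖ ^ 2 + ‖x‖ ^ 2) ∂μ :=
        integral_mono_of_nonneg (ae_of_all _ fun _ => by positivity)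
          ((hI.add hM2).const_mul 2) (ae_of_all _ fun x => norm_add_sq_le_two_mul _ _)
    _ = 2 * (∫ x, ‖∇ (fun y => Real.log (p y)) x‖ ^ 2 ∂μ + ∫ x, ‖x‖ ^ 2 ∂μ) := by
        rw [integral_const_mul, integral_add hI hM2]
    _ ≤ 2 * (d * L + ∫ x, ‖x‖ ^ 2 ∂μ) := by gcongr
end
end

section
/- Let A be the 2d×2d real block matrix A = [[0, Id_d],[−Id_d, 2·Id_d]]. There exists a universal constant C > 0 (independent of d) such that for all t ≥ 0 the operator norm satisfies ‖A · exp(−tA)‖ ≤ C e^{−t/2}; in particular ‖A · exp(−tA)‖ ≤ C' (1+t) e^{−t} for some universal C' > 0. -/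
open Matrix
noncomputable section

/-- The drift matrix `A = [[0, Id_d], [−Id_d, 2·Id_d]]` of the kinetic OU process,
as a `2d × 2d` real matrix indexed by `Fin d ⊕ Fin d`. -/
def kinA (d : ℕ) : Matrix (Fin d ⊕ Fin d) (Fin d ⊕ Fin d) ℝ :=
  Matrix.fromBlocks 0 1 (-1) (2 • (1 : Matrix (Fin d) (Fin d) ℝ))

/-- The operator norm of a square real matrix, acting on Euclidean space. -/
def opNorm (d : ℕ) (M : Matrix (Fin d ⊕ Fin d) (Fin d ⊕ Fin d) ℝ) : ℝ :=
  ‖Matrix.toEuclideanCLM (𝕜 := ℝ) M‖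

/-! `A = 1 + N` with `N = [[-1, 1], [-1, 1]]` and `N² = 0`, so `e^{-tA} = e^{-t}(1 - tN)` and
`A e^{-tA} = e^{-t}(1 + (1 - t)N)`. Since `N` is the sum of the orthogonal matrices
`[[0, 1], [-1, 0]]` and `[[-1, 0], [0, 1]]`, `‖N‖ ≤ 2`, whence `‖A e^{-tA}‖ ≤ 3(1 + t)e^{-t}`,
and `(1 + t)e^{-t/2} ≤ 2` gives the bound `6 e^{-t/2}`. -/

open scoped Matrix.Norms.L2Operator

namespace NormedSpace

theorem exp_eq_one_add_of_mul_self_eq_zero {𝔸 : Type*} [Ring 𝔸] [Algebra ℚ 𝔸]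
    [TopologicalSpace 𝔸] [IsTopologicalRing 𝔸] {x : 𝔸} (hx : x * x = 0) :
    exp x = 1 + x := by
  have hvanish : ∀ n ∉ Finset.range 2, ((n.factorial : ℚ)⁻¹ • x ^ n) = 0 := by
    intro n hn
    obtain ⟨m, rfl⟩ := Nat.exists_eq_add_of_le (not_lt.mp (Finset.mem_range.not.mp hn))
    rw [pow_add, sq, hx, zero_mul, smul_zero]
  rw [exp_eq_tsum_rat]
  beta_reduce
  rw [tsum_eq_sum hvanish]
  simp [Finset.sum_range_succ]

variable {𝔸 : Type*} [NormedRing 𝔸] [NormedAlgebra ℝ 𝔸]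

theorem exp_smul_one (r : ℝ) : exp (r • (1 : 𝔸)) = Real.exp r • (1 : 𝔸) := by
  rw [← Algebra.algebraMap_eq_smul_one, ← algebraMap_exp_comm, Real.exp_eq_exp_ℝ,
    Algebra.algebraMap_eq_smul_one]

variable [CompleteSpace 𝔸] {N : 𝔸}

theorem one_add_mul_exp_neg_smul_one_add_of_mul_self_eq_zero (hN : N * N = 0) (t : ℝ) :
    (1 + N) * exp ((-t) • (1 + N)) = Real.exp (-t) • (1 + (1 - t) • N) := by
  let +nondep : NormedAlgebra ℚ 𝔸 := .restrictScalars ℚ ℝ 𝔸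
  have hexpN : exp ((-t) • N) = 1 + (-t) • N :=
    exp_eq_one_add_of_mul_self_eq_zero (by rw [smul_mul_smul_comm, hN, smul_zero])
  rw [smul_add, exp_add_of_commute ((Commute.one_left N).smul_left _ |>.smul_right _),
    exp_smul_one, hexpN]
  simp only [smul_mul_assoc, one_mul, mul_smul_comm, mul_add, add_mul, mul_one, hN,
    add_zero]
  module

theorem norm_one_add_mul_exp_neg_smul_one_add_le (hN : N * N = 0) (t : ℝ) :
    ‖(1 + N) * exp ((-t) • (1 + N))‖ ≤ Real.exp (-t) * (‖(1 : 𝔸)‖ + |1 - t| * ‖N‖) := by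
  rw [one_add_mul_exp_neg_smul_one_add_of_mul_self_eq_zero hN, norm_smul,
    Real.norm_of_nonneg (Real.exp_pos _).le]
  gcongr
  exact (norm_add_le _ _).trans_eq (by rw [norm_smul, Real.norm_eq_abs])

end NormedSpace

namespace Matrix

variable {𝕜 n : Type*} [RCLike 𝕜] [Fintype n] [DecidableEq n]

theorem l2_opNorm_one_le : ‖(1 : Matrix n n 𝕜)‖ ≤ 1 := by
  rw [cstar_norm_def, map_one]
  exact ContinuousLinearMap.norm_id_le

theorem l2_opNorm_le_one_of_mem_unitaryGroup {U : Matrix n n 𝕜} (hU : U ∈ unitaryGroup n 𝕜) :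
    ‖U‖ ≤ 1 := by
  simpa only [mul_one] using (CStarRing.norm_mem_unitary_mul 1 hU).trans_le l2_opNorm_one_le

theorem fromBlocks_neg_one_one_mul_self {R : Type*} [Ring R] :
    (fromBlocks (-1) 1 (-1) 1 : Matrix (n ⊕ n) (n ⊕ n) R) * fromBlocks (-1) 1 (-1) 1 = 0 := by
  simp [fromBlocks_multiply]

theorem l2_opNorm_fromBlocks_neg_one_one_le :
    ‖(fromBlocks (-1) 1 (-1) 1 : Matrix (n ⊕ n) (n ⊕ n) 𝕜)‖ ≤ 2 := by
  have hrot : fromBlocks 0 1 (-1) 0 ∈ unitaryGroup (n ⊕ n) 𝕜 := by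
    simp [mem_unitaryGroup_iff, star_eq_conjTranspose, fromBlocks_conjTranspose,
      fromBlocks_multiply]
  have hrefl : fromBlocks (-1) 0 0 1 ∈ unitaryGroup (n ⊕ n) 𝕜 := by
    simp [mem_unitaryGroup_iff, star_eq_conjTranspose, fromBlocks_conjTranspose,
      fromBlocks_multiply]
  calc ‖(fromBlocks (-1) 1 (-1) 1 : Matrix (n ⊕ n) (n ⊕ n) 𝕜)‖
      = ‖fromBlocks 0 1 (-1) 0 + fromBlocks (-1) 0 0 1‖ := by simp [fromBlocks_add]
    _ ≤ 1 + 1 := (norm_add_le _ _).trans (add_le_add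
        (l2_opNorm_le_one_of_mem_unitaryGroup hrot) (l2_opNorm_le_one_of_mem_unitaryGroup hrefl))
    _ = 2 := one_add_one_eq_two

end Matrix

theorem kinA_eq_one_add (d : ℕ) : kinA d = 1 + fromBlocks (-1) 1 (-1) 1 := by
  rw [kinA, ← fromBlocks_one, fromBlocks_add]
  congr 1 <;> simp [two_smul]

theorem opNorm_kinA_mul_exp_le (d : ℕ) {t : ℝ} (ht : 0 ≤ t) :
    opNorm d (kinA d * NormedSpace.exp ((-t) • kinA d)) ≤ 3 * (1 + t) * Real.exp (-t) := by
  have h1t : |1 - t| ≤ 1 + t := (abs_sub _ _).trans (by rw [abs_one, abs_of_nonneg ht])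
  rw [opNorm, ← cstar_norm_def, kinA_eq_one_add]
  calc _ ≤ Real.exp (-t) * (‖(1 : Matrix (Fin d ⊕ Fin d) (Fin d ⊕ Fin d) ℝ)‖
          + |1 - t| * ‖(fromBlocks (-1) 1 (-1) 1 : Matrix (Fin d ⊕ Fin d) (Fin d ⊕ Fin d) ℝ)‖) :=
        NormedSpace.norm_one_add_mul_exp_neg_smul_one_add_le fromBlocks_neg_one_one_mul_self t
    _ ≤ Real.exp (-t) * (1 + (1 + t) * 2) := by
        gcongr
        exacts [l2_opNorm_one_le, l2_opNorm_fromBlocks_neg_one_one_le]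
    _ ≤ 3 * (1 + t) * Real.exp (-t) := by nlinarith [Real.exp_pos (-t)]

theorem one_add_mul_exp_neg_le (t : ℝ) : (1 + t) * Real.exp (-t) ≤ 2 * Real.exp (-t / 2) :=
  calc (1 + t) * Real.exp (-t) ≤ 2 * Real.exp (t / 2) * Real.exp (-t) := by
        gcongr; linarith [Real.add_one_le_exp (t / 2)]
    _ = 2 * Real.exp (-t / 2) := by rw [mul_assoc, ← Real.exp_add]; ring_nf

theorem stmt11 :
    (∃ C > (0 : ℝ), ∀ (d : ℕ) (t : ℝ), 0 ≤ t →
      opNorm d (kinA d * NormedSpace.exp ((-t) • kinA d)) ≤ C * Real.exp (-t / 2)) ∧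
    (∃ C' > (0 : ℝ), ∀ (d : ℕ) (t : ℝ), 0 ≤ t →
      opNorm d (kinA d * NormedSpace.exp ((-t) • kinA d)) ≤ C' * (1 + t) * Real.exp (-t)) := by
  refine ⟨⟨6, by norm_num, fun d t ht => ?_⟩, ⟨3, by norm_num, fun d t ht => ?_⟩⟩
  · exact (opNorm_kinA_mul_exp_le d ht).trans (by linarith [one_add_mul_exp_neg_le t])
  · exact opNorm_kinA_mul_exp_le d ht
end
end
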